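/- arXiv:1708.06180 — 2 statements merged into one kernel-verified Lean document; each statement's English description precedes it below -/
import Mathlib

section
/- Let L and T be closed linear operators in a complex Hilbert space (H, ⟨·,·⟩) with norm ‖·‖, L Hermitian and T anti-Hermitian, let Π be the orthogonal projection onto the null space of L, and set A := (1 + (TΠ)*TΠ)^{−1}(TΠ)*. Assume there are positive constants λ_m, λ_M, C_M such that for all F ∈ H: (A1) −⟨LF, F⟩ ≥ λ_m ‖(1−Π)F‖² (microscopic coercivity); (A2) ‖TΠF‖² ≥ λ_M ‖ΠF‖² (macroscopic coercivity); (A3) ΠTΠF = 0 (parabolic macroscopic dynamics); (A4) ‖AT(1−Π)F‖ + ‖ALF‖ ≤ C_M ‖(1−Π)F‖ (bounded auxiliary operators). Then for all t ≥ 0, ‖e^{(L−T)t}‖² ≤ 3 e^{−λ t}, where λ = (λ_M / (3(1+λ_M))) · min{1, λ_m, λ_m λ_M / ((1+λ_M) C_M²)}. -/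
/-!
Following Dolbeault–Mouhot–Schmeiser, one works with the modified entropy
`½‖F‖² + ε Re⟪AF, F⟫`. The weak characterization of `A` gives `‖A‖ ≤ 1/2`, so for `ε ≤ 1/2`
the entropy lies between `‖F‖²/4` and `3‖F‖²/4`. Along the flow, (A1) dissipates the microscopic
part `X = ‖(1 - Π)F‖`, while `ATΠ` is coercive on the range of `Π` with constant
`λ_M / (1 + λ_M)` by (A2), which dissipates the macroscopic part `Y = ‖ΠF‖`; the remaining
terms are bounded by `X²` and `C_M X Y`. For `ε = m / 2`, with `m` the minimum in the rate, the
resulting quadratic form in `(X, Y)` is at most `-(3λ/4)(X² + Y²)`, hence at most `-λ` times the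
entropy, and Grönwall concludes.
-/

open scoped InnerProductSpace

namespace Hypocoercivity

variable {H : Type*} [NormedAddCommGroup H] [InnerProductSpace ℂ H]

section Projection

variable {P : H →ₗ[ℂ] H}

theorem inner_proj_sub_self_eq_zero (hidem : ∀ F, P (P F) = P F) (hsym : P.IsSymmetric) (F : H) :
    ⟪P F, F - P F⟫_ℂ = 0 := by
  rw [hsym, map_sub, hidem, sub_self, inner_zero_right]

theorem norm_sq_eq_norm_sq_proj_add (hidem : ∀ F, P (P F) = P F) (hsym : P.IsSymmetric) (F : H) :
    ‖F‖ ^ 2 = ‖P F‖ ^ 2 + ‖F - P F‖ ^ 2 := by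
  have h := norm_add_sq_eq_norm_sq_add_norm_sq_of_inner_eq_zero (𝕜 := ℂ) _ _
    (inner_proj_sub_self_eq_zero hidem hsym F)
  rw [add_sub_cancel] at h
  simpa only [sq] using h

theorem norm_sub_proj_le (hidem : ∀ F, P (P F) = P F) (hsym : P.IsSymmetric) (F : H) :
    ‖F - P F‖ ≤ ‖F‖ := by
  rw [← sq_le_sq₀ (norm_nonneg _) (norm_nonneg _), norm_sq_eq_norm_sq_proj_add hidem hsym F]
  exact le_add_of_nonneg_left (sq_nonneg _)

theorem inner_eq_inner_proj_right_of_fixed (hsym : P.IsSymmetric) {G : H} (hG : P G = G) (F : H) :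
    ⟪G, F⟫_ℂ = ⟪G, P F⟫_ℂ := by
  rw [← hsym, hG]

end Projection

theorem mul_le_of_mul_sq_le {a b c : ℝ} (ha : 0 ≤ a) (hb : 0 ≤ b) (h : c * a ^ 2 ≤ b * a) :
    c * a ≤ b := by
  rcases ha.eq_or_lt with rfl | ha
  · simpa using hb
  · nlinarith

section AuxiliaryOperator

variable {T A P : H →ₗ[ℂ] H}

theorem proj_apply_A_eq (hidem : ∀ F, P (P F) = P F) (hsym : P.IsSymmetric)
    (hA : ∀ F G, ⟪A F, G⟫_ℂ + ⟪T (P (A F)), T (P G)⟫_ℂ = ⟪F, T (P G)⟫_ℂ) (F : H) :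
    P (A F) = A F := by
  set G := A F - P (A F)
  have hPG : P G = 0 := by simp only [G, map_sub, hidem, sub_self]
  have hAG : ⟪A F, G⟫_ℂ = 0 := by simpa [hPG] using hA F G
  have hG : ⟪G, G⟫_ℂ = 0 := by
    rw [inner_sub_left, hAG, hsym, hPG, inner_zero_right, sub_zero]
  exact (sub_eq_zero.1 (inner_self_eq_zero.1 hG)).symm

theorem norm_sq_A_add_norm_sq_TPA (hsym : P.IsSymmetric)
    (hA : ∀ F G, ⟪A F, G⟫_ℂ + ⟪T (P (A F)), T (P G)⟫_ℂ = ⟪F, T (P G)⟫_ℂ)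
    (hPTP : ∀ F, P (T (P F)) = 0) (F : H) :
    ‖A F‖ ^ 2 + ‖T (P (A F))‖ ^ 2 = (⟪F - P F, T (P (A F))⟫_ℂ).re := by
  have hPF : ⟪P F, T (P (A F))⟫_ℂ = 0 := by rw [hsym, hPTP, inner_zero_right]
  rw [inner_sub_left, hPF, sub_zero, ← hA, Complex.add_re]
  exact congrArg₂ (· + ·) (inner_self_eq_norm_sq (𝕜 := ℂ) (A F)).symm
    (inner_self_eq_norm_sq (𝕜 := ℂ) (T (P (A F)))).symm

theorem norm_TPA_le (hsym : P.IsSymmetric)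
    (hA : ∀ F G, ⟪A F, G⟫_ℂ + ⟪T (P (A F)), T (P G)⟫_ℂ = ⟪F, T (P G)⟫_ℂ)
    (hPTP : ∀ F, P (T (P F)) = 0) (F : H) :
    ‖T (P (A F))‖ ≤ ‖F - P F‖ := by
  have h := norm_sq_A_add_norm_sq_TPA hsym hA hPTP F
  have hcs : (⟪F - P F, T (P (A F))⟫_ℂ).re ≤ ‖F - P F‖ * ‖T (P (A F))‖ :=
    re_inner_le_norm (𝕜 := ℂ) _ _
  have hsq : 1 * ‖T (P (A F))‖ ^ 2 ≤ ‖F - P F‖ * ‖T (P (A F))‖ := by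
    nlinarith [sq_nonneg ‖A F‖]
  simpa using mul_le_of_mul_sq_le (norm_nonneg _) (norm_nonneg _) hsq

theorem norm_A_le_half (hsym : P.IsSymmetric)
    (hA : ∀ F G, ⟪A F, G⟫_ℂ + ⟪T (P (A F)), T (P G)⟫_ℂ = ⟪F, T (P G)⟫_ℂ)
    (hPTP : ∀ F, P (T (P F)) = 0) (F : H) :
    ‖A F‖ ≤ ‖F - P F‖ / 2 := by
  have h := norm_sq_A_add_norm_sq_TPA hsym hA hPTP F
  have hcs : (⟪F - P F, T (P (A F))⟫_ℂ).re ≤ ‖F - P F‖ * ‖T (P (A F))‖ :=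
    re_inner_le_norm (𝕜 := ℂ) _ _
  rw [← sq_le_sq₀ (norm_nonneg _) (by positivity)]
  nlinarith [sq_nonneg (‖F - P F‖ - 2 * ‖T (P (A F))‖)]

theorem norm_A_le (hidem : ∀ F, P (P F) = P F) (hsym : P.IsSymmetric)
    (hA : ∀ F G, ⟪A F, G⟫_ℂ + ⟪T (P (A F)), T (P G)⟫_ℂ = ⟪F, T (P G)⟫_ℂ)
    (hPTP : ∀ F, P (T (P F)) = 0) (F : H) :
    ‖A F‖ ≤ 1 / 2 * ‖F‖ := by
  linarith [norm_A_le_half hsym hA hPTP F, norm_sub_proj_le hidem hsym F]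

theorem one_add_mul_norm_proj_sub_ATP_le (hidem : ∀ F, P (P F) = P F) (hsym : P.IsSymmetric)
    (hA : ∀ F G, ⟪A F, G⟫_ℂ + ⟪T (P (A F)), T (P G)⟫_ℂ = ⟪F, T (P G)⟫_ℂ) {lM : ℝ}
    (hA2 : ∀ F, lM * ‖P F‖ ^ 2 ≤ ‖T (P F)‖ ^ 2) (F : H) :
    (1 + lM) * ‖P F - A (T (P F))‖ ≤ ‖P F‖ := by
  -- `G = (1 + (TΠ)*TΠ)⁻¹ ΠF`, and (A2) makes this resolvent a contraction by `1 / (1 + λ_M)`.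
  set G := P F - A (T (P F))
  have hPG : P G = G := by simp only [G, map_sub, hidem, proj_apply_A_eq hidem hsym hA]
  have hweak : ⟪G, G⟫_ℂ + ⟪T G, T G⟫_ℂ = ⟪P F, G⟫_ℂ := by
    have h := hA (T (P F)) G
    rw [proj_apply_A_eq hidem hsym hA, hPG] at h
    have hGG : ⟪G, G⟫_ℂ = ⟪P F, G⟫_ℂ - ⟪A (T (P F)), G⟫_ℂ := inner_sub_left _ _ _
    have hTGG : ⟪T G, T G⟫_ℂ = ⟪T (P F), T G⟫_ℂ - ⟪T (A (T (P F))), T G⟫_ℂ :=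
      (congrArg (⟪·, T G⟫_ℂ) (map_sub T _ _)).trans (inner_sub_left _ _ _)
    linear_combination hGG + hTGG - h
  have hre : ‖G‖ ^ 2 + ‖T G‖ ^ 2 = (⟪P F, G⟫_ℂ).re := by
    rw [← hweak, Complex.add_re]
    exact congrArg₂ (· + ·) (inner_self_eq_norm_sq (𝕜 := ℂ) G).symm
      (inner_self_eq_norm_sq (𝕜 := ℂ) (T G)).symm
  have hcs : (⟪P F, G⟫_ℂ).re ≤ ‖P F‖ * ‖G‖ := re_inner_le_norm (𝕜 := ℂ) _ _
  have hA2G := hA2 G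
  rw [hPG] at hA2G
  exact mul_le_of_mul_sq_le (norm_nonneg _) (norm_nonneg _) (by nlinarith)

theorem le_re_inner_ATP (hidem : ∀ F, P (P F) = P F) (hsym : P.IsSymmetric)
    (hA : ∀ F G, ⟪A F, G⟫_ℂ + ⟪T (P (A F)), T (P G)⟫_ℂ = ⟪F, T (P G)⟫_ℂ) {lM : ℝ}
    (hlM : 0 ≤ lM) (hA2 : ∀ F, lM * ‖P F‖ ^ 2 ≤ ‖T (P F)‖ ^ 2) (F : H) :
    lM / (1 + lM) * ‖P F‖ ^ 2 ≤ (⟪A (T (P F)), F⟫_ℂ).re := by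
  set G := P F - A (T (P F))
  have hsplit : ⟪A (T (P F)), F⟫_ℂ = ⟪P F, P F⟫_ℂ - ⟪G, P F⟫_ℂ := by
    rw [inner_eq_inner_proj_right_of_fixed hsym (proj_apply_A_eq hidem hsym hA _), inner_sub_left]
    ring
  have hcs : (⟪G, P F⟫_ℂ).re ≤ ‖G‖ * ‖P F‖ := re_inner_le_norm (𝕜 := ℂ) _ _
  have hG := one_add_mul_norm_proj_sub_ATP_le hidem hsym hA hA2 F
  rw [hsplit, Complex.sub_re, show (⟪P F, P F⟫_ℂ).re = ‖P F‖ ^ 2 from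
    inner_self_eq_norm_sq (𝕜 := ℂ) _, div_mul_eq_mul_div, div_le_iff₀ (by linarith)]
  nlinarith [norm_nonneg (P F), norm_nonneg G]

end AuxiliaryOperator

section Dissipation

variable {L T A P : H →ₗ[ℂ] H}

theorem re_inner_apply_self_eq_zero_of_skew (hT : ∀ F G, ⟪T F, G⟫_ℂ = -⟪F, T G⟫_ℂ) (F : H) :
    (⟪T F, F⟫_ℂ).re = 0 := by
  have h := congrArg Complex.re (hT F F)
  have hsymm : (⟪T F, F⟫_ℂ).re = (⟪F, T F⟫_ℂ).re := inner_re_symm (𝕜 := ℂ) _ _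
  rw [Complex.neg_re] at h
  linarith

theorem re_inner_generator_le (hT : ∀ F G, ⟪T F, G⟫_ℂ = -⟪F, T G⟫_ℂ) {lm : ℝ}
    (hA1 : ∀ F, lm * ‖F - P F‖ ^ 2 ≤ -((⟪L F, F⟫_ℂ).re)) (F : H) :
    (⟪L F - T F, F⟫_ℂ).re ≤ -(lm * ‖F - P F‖ ^ 2) := by
  rw [inner_sub_left, Complex.sub_re, re_inner_apply_self_eq_zero_of_skew hT]
  linarith [hA1 F]

theorem re_inner_A_generator_le (hL : L.IsSymmetric) (hT : ∀ F G, ⟪T F, G⟫_ℂ = -⟪F, T G⟫_ℂ)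
    (hker : ∀ F, P F = F → L F = 0) (hidem : ∀ F, P (P F) = P F) (hsym : P.IsSymmetric)
    (hA : ∀ F G, ⟪A F, G⟫_ℂ + ⟪T (P (A F)), T (P G)⟫_ℂ = ⟪F, T (P G)⟫_ℂ)
    (hPTP : ∀ F, P (T (P F)) = 0) (F : H) :
    (⟪A F, L F - T F⟫_ℂ).re ≤ ‖F - P F‖ ^ 2 := by
  have hPA := proj_apply_A_eq hidem hsym hA F
  have hAL : ⟪A F, L F⟫_ℂ = 0 := by rw [← hL, hker _ hPA, inner_zero_left]
  have hAT : -⟪A F, T F⟫_ℂ = ⟪T (P (A F)), F - P F⟫_ℂ := by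
    rw [← hT, hPA, inner_sub_right, ← hsym, ← hPA, hPTP, hPA, inner_zero_left, sub_zero]
  calc (⟪A F, L F - T F⟫_ℂ).re = (⟪T (P (A F)), F - P F⟫_ℂ).re := by
        rw [inner_sub_right, hAL, zero_sub, hAT]
    _ ≤ ‖T (P (A F))‖ * ‖F - P F‖ := re_inner_le_norm (𝕜 := ℂ) _ _
    _ ≤ ‖F - P F‖ ^ 2 := by
        rw [sq]; gcongr; exact norm_TPA_le hsym hA hPTP F

theorem re_inner_A_generator_apply_le (hidem : ∀ F, P (P F) = P F) (hsym : P.IsSymmetric)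
    (hA : ∀ F G, ⟪A F, G⟫_ℂ + ⟪T (P (A F)), T (P G)⟫_ℂ = ⟪F, T (P G)⟫_ℂ) {lM CM : ℝ}
    (hlM : 0 ≤ lM) (hA2 : ∀ F, lM * ‖P F‖ ^ 2 ≤ ‖T (P F)‖ ^ 2)
    (hA4 : ∀ F, ‖A (T (F - P F))‖ + ‖A (L F)‖ ≤ CM * ‖F - P F‖) (F : H) :
    (⟪A (L F - T F), F⟫_ℂ).re
      ≤ CM * ‖F - P F‖ * ‖P F‖ - lM / (1 + lM) * ‖P F‖ ^ 2 := by
  set v := A (L F) - A (T (F - P F))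
  have hPv : P v = v := by simp only [v, map_sub, proj_apply_A_eq hidem hsym hA]
  have hsplit : A (L F - T F) = v - A (T (P F)) := by
    conv_lhs => rw [← add_sub_cancel (P F) F, map_add T]
    simp only [v, map_sub, map_add]
    abel
  have hv : ‖v‖ ≤ CM * ‖F - P F‖ := (norm_sub_le _ _).trans (by linarith [hA4 F])
  have hcs : (⟪v, P F⟫_ℂ).re ≤ ‖v‖ * ‖P F‖ := re_inner_le_norm (𝕜 := ℂ) _ _
  rw [hsplit, inner_sub_left, Complex.sub_re, inner_eq_inner_proj_right_of_fixed hsym hPv]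
  have := le_re_inner_ATP hidem hsym hA hlM hA2 F
  nlinarith [norm_nonneg (P F)]

theorem quadratic_form_le {lm κ CM ε X Y : ℝ} (hε : 0 < ε) (hεlm : ε ≤ lm / 2) (hκ : 0 ≤ κ)
    (hκ1 : κ ≤ 1) (hεCM : 2 * ε * CM ^ 2 ≤ lm * κ) :
    -(lm * X ^ 2) + ε * (X ^ 2 + CM * X * Y - κ * Y ^ 2) ≤ -(κ * ε / 2) * (X ^ 2 + Y ^ 2) := by
  have ha : lm / 4 ≤ lm - ε - κ * ε / 2 := by nlinarith [mul_le_mul_of_nonneg_right hκ1 hε.le]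
  have hdisc : (ε * CM) ^ 2 ≤ 4 * (lm - ε - κ * ε / 2) * (κ * ε / 2) := by
    nlinarith [mul_le_mul_of_nonneg_right ha (mul_nonneg hκ hε.le),
      mul_le_mul_of_nonneg_left hεCM hε.le]
  have hform : 0 ≤ 4 * (lm - ε - κ * ε / 2) *
      ((lm - ε - κ * ε / 2) * X ^ 2 - ε * CM * X * Y + κ * ε / 2 * Y ^ 2) := by
    nlinarith [sq_nonneg (2 * (lm - ε - κ * ε / 2) * X - ε * CM * Y),
      mul_le_mul_of_nonneg_right hdisc (sq_nonneg Y)]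
  have := nonneg_of_mul_nonneg_right hform (by linarith)
  nlinarith

theorem dissipation_le (hL : L.IsSymmetric) (hT : ∀ F G, ⟪T F, G⟫_ℂ = -⟪F, T G⟫_ℂ)
    (hker : ∀ F, P F = F → L F = 0) (hidem : ∀ F, P (P F) = P F) (hsym : P.IsSymmetric)
    (hA : ∀ F G, ⟪A F, G⟫_ℂ + ⟪T (P (A F)), T (P G)⟫_ℂ = ⟪F, T (P G)⟫_ℂ)
    (hPTP : ∀ F, P (T (P F)) = 0) {lm lM CM : ℝ} (hlM : 0 ≤ lM)
    (hA1 : ∀ F, lm * ‖F - P F‖ ^ 2 ≤ -((⟪L F, F⟫_ℂ).re))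
    (hA2 : ∀ F, lM * ‖P F‖ ^ 2 ≤ ‖T (P F)‖ ^ 2)
    (hA4 : ∀ F, ‖A (T (F - P F))‖ + ‖A (L F)‖ ≤ CM * ‖F - P F‖)
    {ε : ℝ} (hε : 0 < ε) (hεlm : ε ≤ lm / 2) (hεCM : 2 * ε * CM ^ 2 ≤ lm * (lM / (1 + lM)))
    (F : H) :
    (⟪L F - T F, F⟫_ℂ).re + ε * ((⟪A F, L F - T F⟫_ℂ).re + (⟪A (L F - T F), F⟫_ℂ).re)
      ≤ -(lM / (1 + lM) * ε / 2) * ‖F‖ ^ 2 := by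
  have hκ1 : lM / (1 + lM) ≤ 1 := (div_le_one (by linarith)).2 (by linarith)
  rw [norm_sq_eq_norm_sq_proj_add hidem hsym F]
  have hquad := quadratic_form_le (X := ‖F - P F‖) (Y := ‖P F‖) hε hεlm (by positivity) hκ1 hεCM
  have h1 := re_inner_generator_le hT hA1 F
  have h2 := re_inner_A_generator_le hL hT hker hidem hsym hA hPTP F
  have h3 := re_inner_A_generator_apply_le hidem hsym hA hlM hA2 hA4 F
  nlinarith

end Dissipation

section Entropy

noncomputable def modifiedEntropy (A : H →ₗ[ℂ] H) (ε : ℝ) (F : H) : ℝ :=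
  ‖F‖ ^ 2 / 2 + ε * (⟪A F, F⟫_ℂ).re

theorem abs_modifiedEntropy_sub_le {A : H →ₗ[ℂ] H} {ε : ℝ} {F : H} (hAF : ‖A F‖ ≤ 1 / 2 * ‖F‖)
    (hε : 0 ≤ ε) (hε1 : ε ≤ 1 / 2) :
    |modifiedEntropy A ε F - ‖F‖ ^ 2 / 2| ≤ ‖F‖ ^ 2 / 4 := by
  have hre : |(⟪A F, F⟫_ℂ).re| ≤ 1 / 2 * ‖F‖ ^ 2 :=
    calc |(⟪A F, F⟫_ℂ).re| ≤ ‖⟪A F, F⟫_ℂ‖ := Complex.abs_re_le_norm _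
      _ ≤ ‖A F‖ * ‖F‖ := norm_inner_le_norm _ _
      _ ≤ 1 / 2 * ‖F‖ ^ 2 := by rw [sq, ← mul_assoc]; gcongr
  rw [modifiedEntropy, add_sub_cancel_left, abs_mul, abs_of_nonneg hε]
  nlinarith [abs_nonneg (⟪A F, F⟫_ℂ).re]

theorem hasDerivAt_modifiedEntropy {A : H →ₗ[ℂ] H} (hA : Continuous A) (ε : ℝ) {u : ℝ → H}
    {u' : H} {s : ℝ} (hu : HasDerivAt u u' s) :
    HasDerivAt (fun s => modifiedEntropy A ε (u s))
      ((⟪u', u s⟫_ℂ).re + ε * ((⟪A (u s), u'⟫_ℂ).re + (⟪A u', u s⟫_ℂ).re)) s := by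
  let A' : H →L[ℂ] H := ⟨A, hA⟩
  have hAu : HasDerivAt (fun s => A (u s)) (A u') s :=
    (A'.restrictScalars ℝ).hasFDerivAt.comp_hasDerivAt s hu
  have hnorm : HasDerivAt (fun s => ‖u s‖ ^ 2 / 2) (⟪u', u s⟫_ℂ).re s := by
    have h := (Complex.reCLM.hasFDerivAt.comp_hasDerivAt s (hu.inner ℂ hu)).div_const 2
    simp only [Function.comp_def, Complex.reCLM_apply, Complex.add_re] at h
    have hsq : (fun s => ‖u s‖ ^ 2 / 2) = fun s => (⟪u s, u s⟫_ℂ).re / 2 :=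
      funext fun s => congrArg (· / 2) (inner_self_eq_norm_sq (𝕜 := ℂ) (u s)).symm
    rw [hsq]
    refine h.congr_deriv ?_
    have hsymm : (⟪u s, u'⟫_ℂ).re = (⟪u', u s⟫_ℂ).re := inner_re_symm (𝕜 := ℂ) _ _
    linarith
  have hcross := Complex.reCLM.hasFDerivAt.comp_hasDerivAt s (hAu.inner ℂ hu)
  simp only [Function.comp_def, Complex.reCLM_apply, Complex.add_re] at hcross
  exact hnorm.add (hcross.const_mul ε)

end Entropy

theorem le_exp_mul_of_hasDerivAt_le {f f' : ℝ → ℝ} {c : ℝ} (hf : ∀ s, HasDerivAt f (f' s) s)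
    (hf' : ∀ s, f' s ≤ -c * f s) {t : ℝ} (ht : 0 ≤ t) :
    f t ≤ Real.exp (-c * t) * f 0 := by
  have hanti : Antitone fun s => Real.exp (c * s) * f s := by
    refine antitone_of_hasDerivAt_nonpos
      (fun s => (((hasDerivAt_id s).const_mul c).exp).mul (hf s)) fun s => ?_
    have := mul_le_mul_of_nonneg_left (hf' s) (Real.exp_pos (c * s)).le
    simp only [id, mul_one, Pi.zero_apply]
    linarith
  have h := hanti ht
  simp only [mul_zero, Real.exp_zero, one_mul] at h
  rw [neg_mul, Real.exp_neg, ← div_eq_inv_mul, le_div_iff₀ (Real.exp_pos _), mul_comm]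
  exact h

end Hypocoercivity

open Hypocoercivity

theorem stmt_3_general
    {H : Type*} [NormedAddCommGroup H] [InnerProductSpace ℂ H]
    (L T A Pr : H →ₗ[ℂ] H)
    -- L Hermitian, T anti-Hermitian
    (hL_sym : ∀ F G : H, ⟪L F, G⟫_ℂ = ⟪F, L G⟫_ℂ)
    (hT_skew : ∀ F G : H, ⟪T F, G⟫_ℂ = -⟪F, T G⟫_ℂ)
    -- Pr is the orthogonal projection onto the null space of L
    (hPr_idem : ∀ F : H, Pr (Pr F) = Pr F)
    (hPr_sym : ∀ F G : H, ⟪Pr F, G⟫_ℂ = ⟪F, Pr G⟫_ℂ)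
    (hPr_ker : ∀ F : H, L F = 0 ↔ Pr F = F)
    -- A = (1 + (TΠ)*TΠ)⁻¹ (TΠ)*, characterized weakly
    (hA : ∀ F G : H, ⟪A F, G⟫_ℂ + ⟪T (Pr (A F)), T (Pr G)⟫_ℂ = ⟪F, T (Pr G)⟫_ℂ)
    (lm lM CM : ℝ) (hlm : 0 < lm) (hlM : 0 < lM) (hCM : 0 < CM)
    -- (A1) microscopic coercivity
    (hA1 : ∀ F : H, lm * ‖F - Pr F‖ ^ 2 ≤ -((⟪L F, F⟫_ℂ).re))
    -- (A2) macroscopic coercivity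
    (hA2 : ∀ F : H, lM * ‖Pr F‖ ^ 2 ≤ ‖T (Pr F)‖ ^ 2)
    -- (A3) parabolic macroscopic dynamics
    (hA3 : ∀ F : H, Pr (T (Pr F)) = 0)
    -- (A4) bounded auxiliary operators
    (hA4 : ∀ F : H, ‖A (T (F - Pr F))‖ + ‖A (L F)‖ ≤ CM * ‖F - Pr F‖) :
    ∀ u : ℝ → H, (∀ t : ℝ, HasDerivAt u (L (u t) - T (u t)) t) →
      ∀ t : ℝ, 0 ≤ t →
        ‖u t‖ ^ 2 ≤
          3 * Real.exp (-(lM / (3 * (1 + lM))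
              * min 1 (min lm (lm * lM / ((1 + lM) * CM ^ 2)))) * t) * ‖u 0‖ ^ 2 := by
  intro u hu t ht
  set m := min 1 (min lm (lm * lM / ((1 + lM) * CM ^ 2)))
  have hm0 : 0 < m := by positivity
  have hm1 : m ≤ 1 := min_le_left _ _
  have hmlm : m ≤ lm := (min_le_right _ _).trans (min_le_left _ _)
  have hmCM : 2 * (m / 2) * CM ^ 2 ≤ lm * (lM / (1 + lM)) := by
    have h : m ≤ lm * lM / ((1 + lM) * CM ^ 2) := (min_le_right _ _).trans (min_le_right _ _)
    rw [le_div_iff₀ (by positivity)] at h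
    rw [mul_div_cancel₀ _ two_ne_zero, mul_div_assoc', le_div_iff₀ (by positivity)]
    linarith
  have hAbd := norm_A_le hPr_idem hPr_sym hA hA3
  have hE : ∀ F, |modifiedEntropy A (m / 2) F - ‖F‖ ^ 2 / 2| ≤ ‖F‖ ^ 2 / 4 := fun F =>
    abs_modifiedEntropy_sub_le (hAbd F) (by positivity) (by linarith)
  have hrate : lM / (3 * (1 + lM)) * m * (3 / 4) = lM / (1 + lM) * (m / 2) / 2 := by
    field_simp; ring
  have hdecay := le_exp_mul_of_hasDerivAt_le (c := lM / (3 * (1 + lM)) * m)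
    (fun s => hasDerivAt_modifiedEntropy (AddMonoidHomClass.continuous_of_bound A _ hAbd)
      (m / 2) (hu s))
    (fun s => by
      have hD := dissipation_le hL_sym hT_skew (fun F => (hPr_ker F).2) hPr_idem hPr_sym hA hA3
        hlM.le hA1 hA2 hA4 (by positivity) (by linarith) hmCM (u s)
      have hEs := (abs_le.1 (hE (u s))).2
      nlinarith [mul_le_mul_of_nonneg_left hEs (by positivity : 0 ≤ lM / (3 * (1 + lM)) * m)])
    ht
  have hE0 := (abs_le.1 (hE (u 0))).2
  have hEt := (abs_le.1 (hE (u t))).1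
  nlinarith [mul_le_mul_of_nonneg_left hE0 (Real.exp_pos (-(lM / (3 * (1 + lM)) * m) * t)).le]

/-- Abstract hypocoercivity (Proposition, after DMS): in a complex Hilbert space H, let L be
Hermitian, T anti-Hermitian, Π the orthogonal projection onto the null space of L
(idempotent, self-adjoint, with fixed-point set exactly ker L), and let
A = (1 + (TΠ)*TΠ)⁻¹(TΠ)*, characterized weakly by
⟪AF, G⟫ + ⟪TΠ(AF), TΠG⟫ = ⟪F, TΠG⟫ for all G.  Under microscopic coercivity (A1),
macroscopic coercivity (A2), parabolic macroscopic dynamics (A3) and bounded auxiliary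
operators (A4), every solution of dF/dt + TF = LF satisfies
‖F(t)‖² ≤ 3 e^{−λt} ‖F(0)‖², i.e. ‖e^{(L−T)t}‖² ≤ 3 e^{−λt}, with
λ = λ_M/(3(1+λ_M)) · min{1, λ_m, λ_m λ_M/((1+λ_M)C_M²)}. -/
theorem stmt_3
    {H : Type*} [NormedAddCommGroup H] [InnerProductSpace ℂ H] [CompleteSpace H]
    (L T A Pr : H →ₗ[ℂ] H)
    -- L Hermitian, T anti-Hermitian
    (hL_sym : ∀ F G : H, ⟪L F, G⟫_ℂ = ⟪F, L G⟫_ℂ)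
    (hT_skew : ∀ F G : H, ⟪T F, G⟫_ℂ = -⟪F, T G⟫_ℂ)
    -- Pr is the orthogonal projection onto the null space of L
    (hPr_idem : ∀ F : H, Pr (Pr F) = Pr F)
    (hPr_sym : ∀ F G : H, ⟪Pr F, G⟫_ℂ = ⟪F, Pr G⟫_ℂ)
    (hPr_ker : ∀ F : H, L F = 0 ↔ Pr F = F)
    -- A = (1 + (TΠ)*TΠ)⁻¹ (TΠ)*, characterized weakly
    (hA : ∀ F G : H, ⟪A F, G⟫_ℂ + ⟪T (Pr (A F)), T (Pr G)⟫_ℂ = ⟪F, T (Pr G)⟫_ℂ)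
    (lm lM CM : ℝ) (hlm : 0 < lm) (hlM : 0 < lM) (hCM : 0 < CM)
    -- (A1) microscopic coercivity
    (hA1 : ∀ F : H, lm * ‖F - Pr F‖ ^ 2 ≤ -((⟪L F, F⟫_ℂ).re))
    -- (A2) macroscopic coercivity
    (hA2 : ∀ F : H, lM * ‖Pr F‖ ^ 2 ≤ ‖T (Pr F)‖ ^ 2)
    -- (A3) parabolic macroscopic dynamics
    (hA3 : ∀ F : H, Pr (T (Pr F)) = 0)
    -- (A4) bounded auxiliary operators
    (hA4 : ∀ F : H, ‖A (T (F - Pr F))‖ + ‖A (L F)‖ ≤ CM * ‖F - Pr F‖) :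
    ∀ u : ℝ → H, (∀ t : ℝ, HasDerivAt u (L (u t) - T (u t)) t) →
      ∀ t : ℝ, 0 ≤ t →
        ‖u t‖ ^ 2 ≤
          3 * Real.exp (-(lM / (3 * (1 + lM))
              * min 1 (min lm (lm * lM / ((1 + lM) * CM ^ 2)))) * t) * ‖u 0‖ ^ 2 :=
  stmt_3_general L T A Pr hL_sym hT_skew hPr_idem hPr_sym hPr_ker hA lm lM CM hlm hlM hCM hA1 hA2
    hA3 hA4
end

section
/- Let H be a complex Hilbert space, Π : H → H an orthogonal projection, and B : H → H a bounded linear operator with B = BΠ and ΠB = 0 (corresponding to B = TΠ with ΠTΠ = 0). For F ∈ H let G be the unique solution of G + B*B G = B*F, i.e., G = (1 + B*B)^{−1}B*F. Then 2‖G‖² + ‖BG‖² ≤ ‖(1−Π)F‖². In particular, the operator A := (1+B*B)^{−1}B* satisfies ‖AF‖ ≤ (1/2)‖(1−Π)F‖ and ‖BAF‖ ≤ ‖(1−Π)F‖ for all F ∈ H. -/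
/-!
Pairing the defining equation `G + B*BG = B*F` with `G` gives
`‖G‖² + ‖BG‖² = Re ⟪BG, F⟫`. Since `ΠB = 0` and `Π` is self-adjoint, `BG ⊥ ΠF`, so `F` may be
replaced by `(1 - Π)F`, and Cauchy–Schwarz yields `‖G‖² + ‖BG‖² ≤ ‖BG‖ ‖(1 - Π)F‖`.
The three bounds are elementary consequences of this inequality.
-/

open ContinuousLinearMap RCLike

open scoped InnerProductSpace

section

variable {𝕜 E E' : Type*} [RCLike 𝕜] [NormedAddCommGroup E] [InnerProductSpace 𝕜 E]
  [NormedAddCommGroup E'] [InnerProductSpace 𝕜 E'] [CompleteSpace E']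

theorem norm_sq_add_norm_apply_sq_eq_re_inner [CompleteSpace E] {B : E →L[𝕜] E'}
    {x : E} {y : E'} (h : x + adjoint B (B x) = adjoint B y) :
    ‖x‖ ^ 2 + ‖B x‖ ^ 2 = re ⟪B x, y⟫_𝕜 := by
  simpa only [inner_add_right, map_add, adjoint_inner_right, inner_self_eq_norm_sq] using
    congrArg (fun z => re ⟪x, z⟫_𝕜) h

theorem inner_apply_sub_eq_inner_of_comp_eq_zero {P : E' →L[𝕜] E'} {B : E →L[𝕜] E'}
    (hP : adjoint P = P) (hPB : P.comp B = 0) (x : E) (y : E') :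
    ⟪B x, y - P y⟫_𝕜 = ⟪B x, y⟫_𝕜 := by
  have hPBx : P (B x) = 0 := by rw [← comp_apply, hPB, zero_apply]
  rw [inner_sub_right, ← hP, adjoint_inner_right, hPBx, inner_zero_left, sub_zero]

end

theorem sq_bounds_of_sq_add_sq_le_mul {a b c : ℝ} (hc : 0 ≤ c) (h : a ^ 2 + b ^ 2 ≤ b * c) :
    2 * a ^ 2 + b ^ 2 ≤ c ^ 2 ∧ a ≤ (1 / 2) * c ∧ b ≤ c := by
  refine ⟨by nlinarith [sq_nonneg (b - c)], ?_, by nlinarith⟩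
  nlinarith [sq_nonneg (b - c / 2), sq_nonneg (a - c / 2)]

theorem stmt_14_general
    {H : Type*} [NormedAddCommGroup H] [InnerProductSpace ℂ H] [CompleteSpace H]
    (Pr B : H →L[ℂ] H)
    (hPr_sa : ContinuousLinearMap.adjoint Pr = Pr)
    (hPrB : Pr.comp B = 0)
    (F G : H)
    (hG : G + ContinuousLinearMap.adjoint B (B G) = ContinuousLinearMap.adjoint B F) :
    2 * ‖G‖ ^ 2 + ‖B G‖ ^ 2 ≤ ‖F - Pr F‖ ^ 2 ∧
    ‖G‖ ≤ (1 / 2) * ‖F - Pr F‖ ∧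
    ‖B G‖ ≤ ‖F - Pr F‖ := by
  refine sq_bounds_of_sq_add_sq_le_mul (norm_nonneg _) ?_
  calc ‖G‖ ^ 2 + ‖B G‖ ^ 2 = re ⟪B G, F⟫_ℂ := norm_sq_add_norm_apply_sq_eq_re_inner hG
    _ = re ⟪B G, F - Pr F⟫_ℂ := by rw [inner_apply_sub_eq_inner_of_comp_eq_zero hPr_sa hPrB]
    _ ≤ ‖B G‖ * ‖F - Pr F‖ := re_inner_le_norm _ _

/-- The key auxiliary bound of the abstract hypocoercivity method: let H be a complex
Hilbert space, Π an orthogonal projection, and B bounded with B = BΠ and ΠB = 0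
(corresponding to B = TΠ with ΠTΠ = 0). If G = (1+B*B)⁻¹B*F, i.e. G + B*(BG) = B*F,
then 2‖G‖² + ‖BG‖² ≤ ‖(1−Π)F‖²; in particular ‖G‖ ≤ (1/2)‖(1−Π)F‖ and
‖BG‖ ≤ ‖(1−Π)F‖, i.e. A = (1+B*B)⁻¹B* satisfies ‖AF‖ ≤ (1/2)‖(1−Π)F‖ and
‖BAF‖ ≤ ‖(1−Π)F‖. -/
theorem stmt_14
    {H : Type*} [NormedAddCommGroup H] [InnerProductSpace ℂ H] [CompleteSpace H]
    (Pr B : H →L[ℂ] H)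
    (hPr_idem : Pr.comp Pr = Pr)
    (hPr_sa : ContinuousLinearMap.adjoint Pr = Pr)
    (hBPr : B.comp Pr = B)
    (hPrB : Pr.comp B = 0)
    (F G : H)
    (hG : G + ContinuousLinearMap.adjoint B (B G) = ContinuousLinearMap.adjoint B F) :
    2 * ‖G‖ ^ 2 + ‖B G‖ ^ 2 ≤ ‖F - Pr F‖ ^ 2 ∧
    ‖G‖ ≤ (1 / 2) * ‖F - Pr F‖ ∧
    ‖B G‖ ≤ ‖F - Pr F‖ :=
  stmt_14_general Pr B hPr_sa hPrB F G hG
end
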